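/- arXiv:2208.04396 — 6 statements merged into one kernel-verified Lean document; each statement's English description precedes it below -/
import Mathlib

section
/- The enrichment function ψ satisfies: (i) ψ(x_k) = 0 and ψ(x_{k+1}) = 0; (ii) its one-sided limits at α are ψ(α⁻) = m₁(α − x_k) and ψ(α⁺) = m₂(α − x_{k+1}); (iii) the jump of its slope is [ψ']_α = m₂ − m₁ = m₁ h_k / (α − x_{k+1} − γ), which is nonzero; and (iv) the jump of its values is [ψ]_α = γ(α − x_{k+1}) / (α − x_{k+1} − γ), which equals 0 if and only if γ = 0. -/
open Set Filter Topology

/-!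
On `(x_k, α)` and `(α, x_{k+1})` the function `ψ` is affine, so its one-sided limits at `α` are the
values of these affine pieces. The algebra rests on `m₁ h_k = α - x_{k+1}`, which gives
`m₂ - m₁ = (α - x_{k+1}) / (α - x_{k+1} - γ)`, and on the observation that the value jump is `γ`
times the slope jump; since the slope jump is never zero, the value jump vanishes exactly when
`γ = 0`.
-/

section OneSidedLimits

variable {X Y : Type*} [TopologicalSpace X] [LinearOrder X] [OrderTopology X] [TopologicalSpace Y]

theorem tendsto_nhdsLT_of_eqOn_Ioo {f g : X → Y} {c a : X} (hc : c < a)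
    (hfg : EqOn f g (Ioo c a)) (hg : ContinuousAt g a) : Tendsto f (𝓝[<] a) (𝓝 (g a)) :=
  hg.continuousWithinAt.tendsto.congr' <|
    mem_of_superset (Ioo_mem_nhdsLT hc) fun _ ht => (hfg ht).symm

theorem tendsto_nhdsGT_of_eqOn_Ioo {f g : X → Y} {a c : X} (hc : a < c)
    (hfg : EqOn f g (Ioo a c)) (hg : ContinuousAt g a) : Tendsto f (𝓝[>] a) (𝓝 (g a)) :=
  hg.continuousWithinAt.tendsto.congr' <|
    mem_of_superset (Ioo_mem_nhdsGT hc) fun _ ht => (hfg ht).symm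

end OneSidedLimits

namespace Enrichment

section Slopes

variable {K : Type*} [Field K]

/-- The slope `m₁` of `ψ` on `[p, α)`, for the element `[p, q]`. -/
def leftSlope (p q α : K) : K := (α - q) / (q - p)

/-- The slope `m₂` of `ψ` on `(α, q]`, for the element `[p, q]`. -/
def rightSlope (p q α γ : K) : K := (α - p - γ) * (α - q) / ((q - p) * (α - q - γ))

variable {p q α γ : K}

theorem leftSlope_mul_sub (hpq : q - p ≠ 0) : leftSlope p q α * (q - p) = α - q :=
  div_mul_cancel₀ _ hpq

theorem rightSlope_sub_leftSlope (hpq : q - p ≠ 0) (hγ : α - q - γ ≠ 0) :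
    rightSlope p q α γ - leftSlope p q α = (α - q) / (α - q - γ) := by
  unfold rightSlope leftSlope
  field_simp
  ring

theorem rightSlope_sub_leftSlope_ne_zero (hpq : q - p ≠ 0) (hαq : α - q ≠ 0)
    (hγ : α - q - γ ≠ 0) : rightSlope p q α γ - leftSlope p q α ≠ 0 := by
  rw [rightSlope_sub_leftSlope hpq hγ]
  exact div_ne_zero hαq hγ

theorem rightSlope_mul_sub_leftSlope_mul (hpq : q - p ≠ 0) (hγ : α - q - γ ≠ 0) :
    rightSlope p q α γ * (α - q) - leftSlope p q α * (α - p)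
      = γ * (rightSlope p q α γ - leftSlope p q α) := by
  rw [rightSlope_sub_leftSlope hpq hγ]
  unfold rightSlope leftSlope
  field_simp
  ring

end Slopes

/-- The enrichment function `ψ` attached to the element `[p, q]` and the interface point `α`. -/
noncomputable def enrichment (p q α γ : ℝ) (t : ℝ) : ℝ :=
  if t < p then 0 else if t < α then leftSlope p q α * (t - p)
  else if t ≤ q then rightSlope p q α γ * (t - q) else 0

variable {p q α γ : ℝ}

theorem enrichment_left_node (hpα : p < α) : enrichment p q α γ p = 0 := by
  simp [enrichment, hpα]

theorem enrichment_right_node (hpα : p < α) (hαq : α < q) : enrichment p q α γ q = 0 := by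
  simp [enrichment, not_lt.mpr (hpα.trans hαq).le, not_lt.mpr hαq.le]

theorem tendsto_enrichment_nhdsLT (hpα : p < α) :
    Tendsto (enrichment p q α γ) (𝓝[<] α) (𝓝 (leftSlope p q α * (α - p))) := by
  refine tendsto_nhdsLT_of_eqOn_Ioo hpα (g := fun t => leftSlope p q α * (t - p))
    (fun t ht => ?_) (by fun_prop)
  simp [enrichment, not_lt.mpr ht.1.le, ht.2]

theorem tendsto_enrichment_nhdsGT (hpα : p < α) (hαq : α < q) :
    Tendsto (enrichment p q α γ) (𝓝[>] α) (𝓝 (rightSlope p q α γ * (α - q))) := by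
  refine tendsto_nhdsGT_of_eqOn_Ioo hαq (g := fun t => rightSlope p q α γ * (t - q))
    (fun t ht => ?_) (by fun_prop)
  simp [enrichment, not_lt.mpr (hpα.trans ht.1).le, not_lt.mpr ht.1.le, ht.2.le]

end Enrichment

open Enrichment in
theorem enrichment_function_properties_general
    (x : ℕ → ℝ) (k : ℕ) (α γ : ℝ)
    (hα1 : x k < α) (hα2 : α < x (k + 1))
    (hγ : α - x (k + 1) - γ ≠ 0) :
    -- the mesh width, slopes, and enrichment function
    let hk : ℝ := x (k + 1) - x k
    let m₁ : ℝ := (α - x (k + 1)) / hk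
    let m₂ : ℝ := (α - x k - γ) * (α - x (k + 1)) / (hk * (α - x (k + 1) - γ))
    let ψ : ℝ → ℝ := fun t =>
      if t < x k then 0 else if t < α then m₁ * (t - x k)
      else if t ≤ x (k + 1) then m₂ * (t - x (k + 1)) else 0
    -- (i)
    (ψ (x k) = 0 ∧ ψ (x (k + 1)) = 0) ∧
    -- (ii) one-sided limits at α
    (Tendsto ψ (𝓝[<] α) (𝓝 (m₁ * (α - x k))) ∧
      Tendsto ψ (𝓝[>] α) (𝓝 (m₂ * (α - x (k + 1))))) ∧
    -- (iii) the slope jump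
    (m₂ - m₁ = m₁ * hk / (α - x (k + 1) - γ) ∧ m₂ - m₁ ≠ 0) ∧
    -- (iv) the value jump
    (m₂ * (α - x (k + 1)) - m₁ * (α - x k)
        = γ * (α - x (k + 1)) / (α - x (k + 1) - γ) ∧
      (m₂ * (α - x (k + 1)) - m₁ * (α - x k) = 0 ↔ γ = 0)) := by
  intro hk m₁ m₂ ψ
  have hhk : x (k + 1) - x k ≠ 0 := sub_ne_zero.mpr (hα1.trans hα2).ne'
  have hαq : α - x (k + 1) ≠ 0 := sub_ne_zero.mpr hα2.ne
  have hm₁ : m₁ * hk = α - x (k + 1) := leftSlope_mul_sub hhk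
  have slope_jump : m₂ - m₁ = (α - x (k + 1)) / (α - x (k + 1) - γ) :=
    rightSlope_sub_leftSlope hhk hγ
  have value_jump : m₂ * (α - x (k + 1)) - m₁ * (α - x k) = γ * (m₂ - m₁) :=
    rightSlope_mul_sub_leftSlope_mul hhk hγ
  have slope_jump_ne : m₂ - m₁ ≠ 0 := rightSlope_sub_leftSlope_ne_zero hhk hαq hγ
  refine ⟨⟨enrichment_left_node hα1, enrichment_right_node hα1 hα2⟩,
    ⟨tendsto_enrichment_nhdsLT hα1, tendsto_enrichment_nhdsGT hα1 hα2⟩,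
    ⟨by rw [hm₁, slope_jump], slope_jump_ne⟩,
    by rw [value_jump, slope_jump, mul_div_assoc], ?_⟩
  rw [value_jump]
  exact mul_eq_zero_iff_right slope_jump_ne

/-- Basic properties of the enrichment function `ψ`:
(i) it vanishes at the nodes `x_k` and `x_{k+1}`;
(ii) its one-sided limits at `α` are `m₁(α - x_k)` and `m₂(α - x_{k+1})`;
(iii) its slope jump is `[ψ']_α = m₂ - m₁ = m₁ h_k/(α - x_{k+1} - γ) ≠ 0`;
(iv) its value jump is `[ψ]_α = γ(α - x_{k+1})/(α - x_{k+1} - γ)`, which is `0` iff `γ = 0`. -/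
theorem enrichment_function_properties
    (a b : ℝ) (n : ℕ) (x : ℕ → ℝ) (k : ℕ) (α γ : ℝ)
    (hab : a < b) (hx0 : x 0 = a) (hxn : x n = b)
    (hmono : ∀ i, i < n → x i < x (i + 1)) (hkn : k + 1 ≤ n)
    (hα1 : x k < α) (hα2 : α < x (k + 1))
    (hγ : α - x (k + 1) - γ ≠ 0) :
    -- the mesh width, slopes, and enrichment function
    let hk : ℝ := x (k + 1) - x k
    let m₁ : ℝ := (α - x (k + 1)) / hk
    let m₂ : ℝ := (α - x k - γ) * (α - x (k + 1)) / (hk * (α - x (k + 1) - γ))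
    let ψ : ℝ → ℝ := fun t =>
      if t < x k then 0 else if t < α then m₁ * (t - x k)
      else if t ≤ x (k + 1) then m₂ * (t - x (k + 1)) else 0
    -- (i)
    (ψ (x k) = 0 ∧ ψ (x (k + 1)) = 0) ∧
    -- (ii) one-sided limits at α
    (Tendsto ψ (𝓝[<] α) (𝓝 (m₁ * (α - x k))) ∧
      Tendsto ψ (𝓝[>] α) (𝓝 (m₂ * (α - x (k + 1))))) ∧
    -- (iii) the slope jump
    (m₂ - m₁ = m₁ * hk / (α - x (k + 1) - γ) ∧ m₂ - m₁ ≠ 0) ∧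
    -- (iv) the value jump
    (m₂ * (α - x (k + 1)) - m₁ * (α - x k)
        = γ * (α - x (k + 1)) / (α - x (k + 1) - γ) ∧
      (m₂ * (α - x (k + 1)) - m₁ * (α - x k) = 0 ↔ γ = 0)) :=
  enrichment_function_properties_general x k α γ hα1 hα2 hγ
end

section
/- Suppose γ > 0 and h_k = x_{k+1} − x_k ≤ 1. Then the slopes of the enrichment function are uniformly bounded: |m₁| ≤ 1 and |m₂| ≤ (1 + γ)/γ, and consequently |m₁| + |m₂| ≤ 1 + (1 + γ)/γ, a bound independent of the partition points x_k, x_{k+1} and of the interface position α ∈ (x_k, x_{k+1}). -/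
/-- Uniform boundedness of the slopes of the enrichment function:
if `γ > 0` and `h_k = x_{k+1} - x_k ≤ 1` then `|m₁| ≤ 1`, `|m₂| ≤ (1 + γ)/γ`, and
hence `|m₁| + |m₂| ≤ 1 + (1 + γ)/γ`, independently of `x_k`, `x_{k+1}` and
`α ∈ (x_k, x_{k+1})`. -/
theorem enrichment_slopes_uniformly_bounded
    (xk xk1 α γ : ℝ)
    (hα1 : xk < α) (hα2 : α < xk1)
    (hγ : 0 < γ) (hk1 : xk1 - xk ≤ 1) :
    let hk : ℝ := xk1 - xk
    let m₁ : ℝ := (α - xk1) / hk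
    let m₂ : ℝ := (α - xk - γ) * (α - xk1) / (hk * (α - xk1 - γ))
    |m₁| ≤ 1 ∧ |m₂| ≤ (1 + γ) / γ ∧ |m₁| + |m₂| ≤ 1 + (1 + γ) / γ := by
  intro hk m₁ m₂
  have hhk : (0:ℝ) < hk := by simp only [hk]; linarith
  have h1 : |m₁| ≤ 1 := by
    rw [show m₁ = (α - xk1) / hk from rfl, abs_div, abs_of_pos hhk,
      abs_of_neg (by linarith : α - xk1 < 0), div_le_one hhk]
    simp only [hk]; linarith
  have habs : |α - xk - γ| ≤ 1 + γ := by
    rw [abs_le]; constructor <;> [linarith; linarith]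
  have hden : (0:ℝ) < hk * (xk1 - α + γ) := by
    apply mul_pos hhk; linarith
  have h2 : |m₂| ≤ (1 + γ) / γ := by
    have : |m₂| = |α - xk - γ| * (xk1 - α) / (hk * (xk1 - α + γ)) := by
      rw [show m₂ = (α - xk - γ) * (α - xk1) / (hk * (α - xk1 - γ)) from rfl,
        abs_div, abs_mul, abs_mul, abs_of_pos hhk,
        abs_of_neg (by linarith : α - xk1 < 0),
        abs_of_neg (by linarith : α - xk1 - γ < 0)]
      ring_nf
    rw [this, div_le_div_iff₀ hden hγ]
    have hb : xk1 - α ≤ hk := by simp only [hk]; linarith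
    have habs0 : (0:ℝ) ≤ |α - xk - γ| := abs_nonneg _
    have hb0 : (0:ℝ) < xk1 - α := by linarith
    nlinarith [mul_nonneg (mul_nonneg (by linarith : (0:ℝ) ≤ 1 + γ - |α - xk - γ|) hb0.le) hγ.le,
      mul_nonneg (mul_nonneg (by linarith : (0:ℝ) ≤ 1 + γ) hγ.le) (by linarith : (0:ℝ) ≤ hk - (xk1 - α)),
      mul_nonneg (mul_nonneg (by linarith : (0:ℝ) ≤ 1 + γ) hhk.le) hb0.le]
  exact ⟨h1, h2, by linarith⟩
end

section
/- Let J ∈ ℝ and J' ∈ ℝ denote the value jump and derivative jump of a function across α, let δ = −J/(α − x_{k+1}), and suppose the Robin jump relation J = γ J' holds. Then the following two design cancellation identities hold: (i) δ m₁ = −J/h_k (the left-element cancellation), and (ii) ((x_k − α)/h_k) J' + J/h_k + m₂ J' + δ m₂ = 0 (the right-element cancellation, i.e. the coefficient J̃₅ of the derivative jump vanishes). -/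
/-- The design cancellation identities behind the choice of the
correction parameter `δ = -J/(α - x_{k+1})` and of the slope `m₂`: if the Robin
jump relation `J = γ J'` holds, then (i) `δ m₁ = -J/h_k`, and
(ii) `((x_k - α)/h_k) J' + J/h_k + m₂ J' + δ m₂ = 0`. -/
theorem design_cancellation_identities
    (xk xk1 α γ J J' : ℝ)
    (hα1 : xk < α) (hα2 : α < xk1)
    (hγ : α - xk1 - γ ≠ 0)
    (hJ : J = γ * J') :
    let hk : ℝ := xk1 - xk
    let m₁ : ℝ := (α - xk1) / hk
    let m₂ : ℝ := (α - xk - γ) * (α - xk1) / (hk * (α - xk1 - γ))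
    let δ : ℝ := -J / (α - xk1)
    -- (i) the left-element cancellation
    δ * m₁ = -J / hk ∧
    -- (ii) the right-element cancellation (the coefficient J̃₅ vanishes)
    ((xk - α) / hk) * J' + J / hk + m₂ * J' + δ * m₂ = 0 := by
  intro hk m₁ m₂ δ
  have hhk : hk ≠ 0 := by simp only [hk]; nlinarith
  have hne : α - xk1 ≠ 0 := by nlinarith
  constructor
  · simp only [δ, m₁]
    field_simp
  · simp only [δ, m₂, hk]
    subst hJ
    field_simp
    ring
end

section
/- (Lemma 3.1) There exists an absolute constant C > 0, independent of the partition, of the mesh size h, of the interface position α, of γ, and of p, such that for every partition with h ≤ 1 and every p as in the context, (∫_a^α |(Ī_h p − I_h p)'(x)|² dx)^{1/2} ≤ C h (‖p₁''‖_{L²(a,b)} + ‖p₂''‖_{L²(a,b)}), where the derivative is taken on each open subinterval of the partition (excluding the break points). -/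
/-!
Left of the cut element `[x_k, x_{k+1}]` both `Ī_h p` and `I_h p` equal the nodal interpolant of
`p₁`, so the error vanishes there. On the cut part `(x_k, α)` the error is a quadratic in
`t - x_k`: with `g = p₂ - p₁`, its slope at `x_k` is the Taylor remainder
`(g α - g x_{k+1} - g' x_k (α - x_{k+1})) / h_k` (the `δψ` term is what absorbs the jump
`[p]_α`), and its `(t - x_k)²` coefficient is `-m₁ (g' x_{k+1} - g' x_k) / h_k` with
`|m₁| ≤ 1`. Both are bounded by `∫_{x_k}^{x_{k+1}} |g''|`, so the derivative of the error is at
most three times that integral, and Cauchy–Schwarz turns this into `h_k ‖g''‖_{L²}`.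
-/

open Set intervalIntegral

theorem sq_integral_abs_le_mul_integral_sq {f : ℝ → ℝ} (hf : Continuous f) {u v : ℝ}
    (huv : u ≤ v) : (∫ t in u..v, |f t|) ^ 2 ≤ (v - u) * ∫ t in u..v, f t ^ 2 := by
  have hquad : ∀ c : ℝ, 0 ≤ (v - u) * (c * c) + (-2 * ∫ t in u..v, |f t|) * c +
      ∫ t in u..v, f t ^ 2 := fun c => calc
    0 ≤ ∫ t in u..v, (c - |f t|) ^ 2 := integral_nonneg huv fun t _ => sq_nonneg _
    _ = ∫ t in u..v, ((c ^ 2 - 2 * c * |f t|) + f t ^ 2) := by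
        congr 1; ext t; rw [sub_sq, sq_abs]
    _ = _ := by
        rw [integral_add ((by fun_prop : Continuous _).intervalIntegrable u v)
            ((by fun_prop : Continuous fun t => f t ^ 2).intervalIntegrable u v),
          integral_sub intervalIntegrable_const
            ((by fun_prop : Continuous _).intervalIntegrable u v),
          integral_const, integral_const_mul, smul_eq_mul]
        ring
  have := discrim_le_zero hquad
  rw [discrim] at this
  linarith

theorem abs_sub_le_integral_abs_deriv {f f' : ℝ → ℝ} (hf : ∀ t, HasDerivAt f (f' t) t)
    (hf' : Continuous f') {c d w : ℝ} (hcw : c ≤ w) (hwd : w ≤ d) :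
    |f w - f c| ≤ ∫ t in c..d, |f' t| := by
  rw [← integral_eq_sub_of_hasDerivAt (fun t _ => hf t) (hf'.intervalIntegrable c w)]
  calc |∫ t in c..w, f' t| ≤ ∫ t in c..w, |f' t| := abs_integral_le_integral_abs hcw
    _ ≤ ∫ t in c..d, |f' t| :=
      integral_mono_interval le_rfl hcw hwd
        (Filter.Eventually.of_forall fun t => abs_nonneg _) (hf'.abs.intervalIntegrable c d)

theorem abs_sub_sub_mul_le_integral_abs {g g' g'' : ℝ → ℝ} (hg : ∀ t, HasDerivAt g (g' t) t)
    (hg' : ∀ t, HasDerivAt g' (g'' t) t) (hg'' : Continuous g'') {c α v d : ℝ}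
    (hcα : c ≤ α) (hαv : α ≤ v) (hvd : v ≤ d) :
    |g v - g α - g' c * (v - α)| ≤ (∫ t in c..d, |g'' t|) * (v - α) := by
  have hderiv : ∀ s ∈ Icc α v, HasDerivWithinAt (fun s => g s - g' c * s) (g' s - g' c)
      (Icc α v) s := fun s _ =>
    ((hg s).sub ((hasDerivAt_id s).const_mul (g' c))).hasDerivWithinAt.congr_deriv (by ring)
  have hbound : ∀ s ∈ Ico α v, ‖g' s - g' c‖ ≤ ∫ t in c..d, |g'' t| := fun s hs =>
    abs_sub_le_integral_abs_deriv hg' hg'' (hcα.trans hs.1) (hs.2.le.trans hvd)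
  have := norm_image_sub_le_of_norm_deriv_le_segment' hderiv hbound v ⟨hαv, le_rfl⟩
  rw [Real.norm_eq_abs] at this
  convert this using 2; ring

theorem integral_sq_le_of_eqOn_Ioo {f D : ℝ → ℝ} {a u α K : ℝ} (hau : a ≤ u) (huα : u ≤ α)
    (hf₀ : EqOn f 0 (Ioo a u)) (hfD : EqOn f D (Ioo u α)) (hD : Continuous D)
    (hK : ∀ t ∈ Ioo u α, |D t| ≤ K) : ∫ t in a..α, f t ^ 2 ≤ (α - u) * K ^ 2 := by
  have h₀ : EqOn (fun t => f t ^ 2) 0 (Ioo a u) := fun t ht => by simp [hf₀ ht]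
  have h₁ : EqOn (fun t => f t ^ 2) (fun t => D t ^ 2) (Ioo u α) := fun t ht => by
    simp only [hfD ht]
  have hi₀ : IntervalIntegrable (fun t => f t ^ 2) MeasureTheory.volume a u :=
    (intervalIntegrable_const (c := (0 : ℝ))).congr_uIoo (uIoo_of_le hau ▸ h₀.symm)
  have hi₁ : IntervalIntegrable (fun t => f t ^ 2) MeasureTheory.volume u α :=
    ((hD.pow 2).intervalIntegrable u α).congr_uIoo (uIoo_of_le huα ▸ h₁.symm)
  rw [← integral_add_adjacent_intervals hi₀ hi₁, integral_congr_Ioo_of_le hau h₀,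
    integral_congr_Ioo_of_le huα h₁]
  calc (∫ _ in a..u, (0 : ℝ)) + ∫ t in u..α, D t ^ 2 ≤ 0 + ∫ _ in u..α, K ^ 2 := by
        gcongr ?_ + ?_
        · simp
        · exact integral_mono_on_of_le_Ioo huα ((hD.pow 2).intervalIntegrable u α)
            intervalIntegrable_const fun t ht => sq_le_sq' (abs_le.mp (hK t ht)).1
              (abs_le.mp (hK t ht)).2
    _ = (α - u) * K ^ 2 := by simp

theorem integral_sq_sub_le {f₁ f₂ : ℝ → ℝ} (hf₁ : Continuous f₁) (hf₂ : Continuous f₂)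
    {a b : ℝ} (hab : a ≤ b) :
    ∫ t in a..b, (f₂ t - f₁ t) ^ 2 ≤ 2 * (∫ t in a..b, f₁ t ^ 2) + 2 * ∫ t in a..b, f₂ t ^ 2 := by
  have hi : ∀ f : ℝ → ℝ, Continuous f →
      IntervalIntegrable (fun t => 2 * f t ^ 2) MeasureTheory.volume a b :=
    fun f hf => (continuous_const.mul (hf.pow 2)).intervalIntegrable a b
  calc _ ≤ ∫ t in a..b, (2 * f₁ t ^ 2 + 2 * f₂ t ^ 2) :=
        integral_mono_on hab
          ((by fun_prop : Continuous fun t => (f₂ t - f₁ t) ^ 2).intervalIntegrable a b)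
          ((hi f₁ hf₁).add (hi f₂ hf₂)) fun t _ => by nlinarith [sq_nonneg (f₁ t + f₂ t)]
    _ = 2 * (∫ t in a..b, f₁ t ^ 2) + 2 * ∫ t in a..b, f₂ t ^ 2 := by
        rw [integral_add (hi f₁ hf₁) (hi f₂ hf₂), integral_const_mul, integral_const_mul]

theorem hasDerivAt_deriv_of_contDiff_two {p : ℝ → ℝ} (hp : ContDiff ℝ 2 p) :
    (∀ t, HasDerivAt p (deriv p t) t) ∧ (∀ t, HasDerivAt (deriv p) (deriv (deriv p) t) t) ∧
      Continuous (deriv (deriv p)) := by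
  have hp' : ContDiff ℝ 1 (deriv p) := hp.iterate_deriv' 1 1
  exact ⟨fun t => (hp.differentiable (by norm_num) t).hasDerivAt,
    fun t => (hp'.differentiable (by norm_num) t).hasDerivAt, hp'.continuous_deriv le_rfl⟩

def AffineOn (f : ℝ → ℝ) (s : Set ℝ) : Prop := ∃ c d : ℝ, ∀ t ∈ s, f t = c * t + d

namespace AffineOn

variable {f g : ℝ → ℝ} {s : Set ℝ}

theorem eq_lineInterp (hf : AffineOn f s) {u v t : ℝ} (hu : u ∈ s) (hv : v ∈ s) (ht : t ∈ s)
    (huv : u ≠ v) : f t = f u + (f v - f u) / (v - u) * (t - u) := by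
  obtain ⟨c, d, hf⟩ := hf
  rw [hf t ht, hf u hu, hf v hv]
  field_simp [sub_ne_zero.mpr huv.symm]
  ring

theorem eqOn_of_eq_of_eq (hf : AffineOn f s) (hg : AffineOn g s) {u v : ℝ} (hu : u ∈ s)
    (hv : v ∈ s) (huv : u ≠ v) (hfgu : f u = g u) (hfgv : f v = g v) : EqOn f g s := by
  intro t ht
  rw [hf.eq_lineInterp hu hv ht huv, hg.eq_lineInterp hu hv ht huv, hfgu, hfgv]

end AffineOn

theorem eqOn_Icc_of_affineOn_of_eq_nodes {x : ℕ → ℝ} {f g : ℝ → ℝ} (k : ℕ)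
    (hx : ∀ i < k, x i < x (i + 1))
    (hf : ∀ i < k, AffineOn f (Icc (x i) (x (i + 1))))
    (hg : ∀ i < k, AffineOn g (Icc (x i) (x (i + 1))))
    (hfg : ∀ i ≤ k, f (x i) = g (x i)) : EqOn f g (Icc (x 0) (x k)) := by
  induction k with
  | zero =>
    intro t ht
    rw [Icc_self, mem_singleton_iff] at ht
    exact ht ▸ hfg 0 le_rfl
  | succ k ih =>
    intro t ⟨h0t, htk⟩
    rcases le_total t (x k) with htk' | hkt
    · exact ih (fun i hi => hx i (by omega)) (fun i hi => hf i (by omega))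
        (fun i hi => hg i (by omega)) (fun i hi => hfg i (by omega)) ⟨h0t, htk'⟩
    · have hk := (hx k k.lt_succ_self).le
      exact (hf k k.lt_succ_self).eqOn_of_eq_of_eq (hg k k.lt_succ_self) ⟨le_rfl, hk⟩
        ⟨hk, le_rfl⟩ (hx k k.lt_succ_self).ne (hfg k (by omega)) (hfg (k + 1) le_rfl)
        ⟨hkt, htk⟩

/-- `Ī_h p - I_h p` on the cut part `(x_k, α)` of the element `[u, v] = [x_k, x_{k+1}]`,
for `g = p₂ - p₁` and `g' = p₂' - p₁'`. -/
noncomputable def cutError (g g' : ℝ → ℝ) (u α v : ℝ) (s : ℝ) : ℝ :=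
  (g α - g v - g' u * (α - v)) / (v - u) * (s - u) -
    (α - v) / (v - u) * ((g' v - g' u) / (v - u)) * (s - u) ^ 2

theorem contDiff_cutError (g g' : ℝ → ℝ) (u α v : ℝ) :
    ContDiff ℝ 1 (cutError g g' u α v) := by
  unfold cutError; fun_prop

theorem abs_deriv_cutError_le {g g' g'' : ℝ → ℝ} (hg : ∀ t, HasDerivAt g (g' t) t)
    (hg' : ∀ t, HasDerivAt g' (g'' t) t) (hg'' : Continuous g'') {u α v t : ℝ}
    (huα : u < α) (hαv : α < v) (hut : u ≤ t) (htα : t ≤ α) :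
    |deriv (cutError g g' u α v) t| ≤ 3 * ∫ s in u..v, |g'' s| := by
  set M := ∫ s in u..v, |g'' s|
  have hvu : 0 < v - u := by linarith
  have hM : 0 ≤ M := integral_nonneg (huα.trans hαv).le fun s _ => abs_nonneg _
  have hslope : |(g α - g v - g' u * (α - v)) / (v - u)| ≤ M := by
    rw [abs_div, abs_of_pos hvu, div_le_iff₀ hvu]
    calc |g α - g v - g' u * (α - v)| = |g v - g α - g' u * (v - α)| := by
          rw [← abs_neg]; ring_nf
      _ ≤ M * (v - α) := abs_sub_sub_mul_le_integral_abs hg hg' hg'' huα.le hαv.le le_rfl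
      _ ≤ M * (v - u) := by gcongr
  have hcurv : |(α - v) / (v - u) * ((t - u) / (v - u)) * (g' v - g' u)| ≤ M := by
    have h₁ : |(α - v) / (v - u)| ≤ 1 := by
      rw [abs_div, abs_of_pos hvu, div_le_one hvu, abs_of_neg (by linarith)]; linarith
    have h₂ : |(t - u) / (v - u)| ≤ 1 := by
      rw [abs_div, abs_of_pos hvu, div_le_one hvu, abs_of_nonneg (by linarith)]; linarith
    have h₃ : |g' v - g' u| ≤ M :=
      abs_sub_le_integral_abs_deriv hg' hg'' (huα.trans hαv).le le_rfl
    calc _ = |(α - v) / (v - u)| * |(t - u) / (v - u)| * |g' v - g' u| := by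
          rw [abs_mul, abs_mul]
      _ ≤ 1 * 1 * M := by gcongr
      _ = M := by ring
  have hderiv : HasDerivAt (cutError g g' u α v)
      ((g α - g v - g' u * (α - v)) / (v - u) -
        2 * ((α - v) / (v - u) * ((t - u) / (v - u)) * (g' v - g' u))) t := by
    have hlin : HasDerivAt (fun s => s - u) 1 t := (hasDerivAt_id t).sub_const u
    exact ((hlin.const_mul _).sub ((hlin.pow 2).const_mul _)).congr_deriv (by ring)
  rw [hderiv.deriv]
  calc _ ≤ |(g α - g v - g' u * (α - v)) / (v - u)| +
        |2 * ((α - v) / (v - u) * ((t - u) / (v - u)) * (g' v - g' u))| := abs_sub _ _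
    _ ≤ M + 2 * M := by rw [abs_mul, abs_two]; linarith
    _ = 3 * M := by ring

theorem sub_enriched_eq_cutError {p₁ p₂ g' P P₁ Q : ℝ → ℝ} {u α v s : ℝ} (huv : u < v)
    (hαv : α ≠ v) (hs : s ∈ Icc u v) (hP : AffineOn P (Icc u v)) (hP₁ : AffineOn P₁ (Icc u v))
    (hQ : AffineOn Q (Icc u v)) (hPu : P u = p₁ u) (hPv : P v = p₂ v) (hP₁u : P₁ u = p₁ u)
    (hP₁v : P₁ v = p₁ v) (hQu : Q u = g' u) (hQv : Q v = g' v) :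
    P₁ s - (P s + (Q s + -(p₂ α - p₁ α) / (α - v)) * ((α - v) / (v - u) * (s - u))) =
      cutError (p₂ - p₁) g' u α v s := by
  have hu : u ∈ Icc u v := left_mem_Icc.mpr huv.le
  have hv : v ∈ Icc u v := right_mem_Icc.mpr huv.le
  rw [hP.eq_lineInterp hu hv hs huv.ne, hP₁.eq_lineInterp hu hv hs huv.ne,
    hQ.eq_lineInterp hu hv hs huv.ne, hPu, hPv, hP₁u, hP₁v, hQu, hQv, cutError]
  simp only [Pi.sub_apply]
  field_simp [sub_ne_zero.mpr hαv, sub_ne_zero.mpr huv.ne']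
  ring

theorem integral_sq_deriv_le_of_eqOn_cutError {F g g' g'' : ℝ → ℝ}
    (hg : ∀ t, HasDerivAt g (g' t) t) (hg' : ∀ t, HasDerivAt g' (g'' t) t)
    (hg'' : Continuous g'') {a u α v : ℝ} (hau : a ≤ u) (huα : u < α) (hαv : α < v)
    (hF₀ : EqOn F 0 (Ioo a u)) (hF : EqOn F (cutError g g' u α v) (Ioo u α)) :
    ∫ t in a..α, deriv F t ^ 2 ≤ 9 * (v - u) ^ 2 * ∫ t in u..v, g'' t ^ 2 := by
  set M := ∫ t in u..v, |g'' t|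
  have hderiv₀ : EqOn (deriv F) 0 (Ioo a u) := fun t ht => by
    simp [hF₀.deriv isOpen_Ioo ht]
  calc ∫ t in a..α, deriv F t ^ 2 ≤ (α - u) * (3 * M) ^ 2 :=
        integral_sq_le_of_eqOn_Ioo hau huα.le hderiv₀ (hF.deriv isOpen_Ioo)
          ((contDiff_cutError g g' u α v).continuous_deriv le_rfl)
          fun t ht => abs_deriv_cutError_le hg hg' hg'' huα hαv ht.1.le ht.2.le
    _ ≤ 9 * (v - u) * M ^ 2 := by nlinarith [sq_nonneg M]
    _ ≤ 9 * (v - u) * ((v - u) * ∫ t in u..v, g'' t ^ 2) := by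
        gcongr
        · linarith
        · exact sq_integral_abs_le_mul_integral_sq hg'' (huα.trans hαv).le
    _ = 9 * (v - u) ^ 2 * ∫ t in u..v, g'' t ^ 2 := by ring

theorem rpow_half_le_of_le_mul_integral_sq_sub {f₁ f₂ : ℝ → ℝ} (hf₁ : Continuous f₁)
    (hf₂ : Continuous f₂) {a u v b h X : ℝ} (hau : a ≤ u) (huv : u ≤ v) (hvb : v ≤ b)
    (hvuh : v - u ≤ h) (hX : X ≤ 9 * (v - u) ^ 2 * ∫ t in u..v, (f₂ t - f₁ t) ^ 2) :
    X ^ (1 / 2 : ℝ) ≤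
      5 * h * ((∫ t in a..b, f₁ t ^ 2) ^ (1 / 2 : ℝ) + (∫ t in a..b, f₂ t ^ 2) ^ (1 / 2 : ℝ)) := by
  have hab := hau.trans (huv.trans hvb)
  have hI₁ : 0 ≤ ∫ t in a..b, f₁ t ^ 2 := integral_nonneg hab fun _ _ => sq_nonneg _
  have hI₂ : 0 ≤ ∫ t in a..b, f₂ t ^ 2 := integral_nonneg hab fun _ _ => sq_nonneg _
  have hloc : ∫ t in u..v, (f₂ t - f₁ t) ^ 2 ≤ ∫ t in a..b, (f₂ t - f₁ t) ^ 2 :=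
    integral_mono_interval hau huv hvb (Filter.Eventually.of_forall fun _ => sq_nonneg _)
      ((by fun_prop : Continuous fun t => (f₂ t - f₁ t) ^ 2).intervalIntegrable a b)
  have hX' : X ≤ 18 * h ^ 2 * ((∫ t in a..b, f₁ t ^ 2) + ∫ t in a..b, f₂ t ^ 2) := calc
    X ≤ 9 * h ^ 2 * ∫ t in a..b, (f₂ t - f₁ t) ^ 2 :=
      hX.trans <| mul_le_mul (by gcongr) hloc
        (integral_nonneg huv fun _ _ => sq_nonneg _) (by positivity)
    _ ≤ _ := by nlinarith [integral_sq_sub_le hf₁ hf₂ hab, sq_nonneg h]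
  rw [← Real.sqrt_eq_rpow, ← Real.sqrt_eq_rpow, ← Real.sqrt_eq_rpow, Real.sqrt_le_iff]
  have hh : 0 ≤ h := (sub_nonneg.mpr huv).trans hvuh
  refine ⟨by positivity, hX'.trans ?_⟩
  nlinarith [Real.sq_sqrt hI₁, Real.sq_sqrt hI₂, sq_nonneg (h * √(∫ t in a..b, f₁ t ^ 2)),
    sq_nonneg (h * √(∫ t in a..b, f₂ t ^ 2)),
    mul_nonneg (sq_nonneg h) (mul_nonneg (Real.sqrt_nonneg (∫ t in a..b, f₁ t ^ 2))
      (Real.sqrt_nonneg (∫ t in a..b, f₂ t ^ 2)))]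

/-- **Lemma 3.1.** There is an absolute constant `C > 0`, independent
of the partition, the mesh size `h`, the interface position `α`, of `γ`, and of `p`,
such that the broken `H¹` seminorm over `(a,α)` of `Ī_h p - I_h p` is bounded by
`C h (‖p₁''‖_{L²(a,b)} + ‖p₂''‖_{L²(a,b)})`.  Here `π_h` (nodal piecewise-linear
interpolation) is characterized by its nodal values and by being affine on each
element; `P = π_h p`, `P₁ = π_h p₁`, `P₂ = π_h p₂`, `Q = π_h (p₂' - p₁')`. -/
theorem lemma_3_1_left_interpolation_estimate :
    ∃ C : ℝ, 0 < C ∧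
      ∀ (a b : ℝ) (n : ℕ) (x : ℕ → ℝ) (k : ℕ) (α γ h : ℝ)
        (p₁ p₂ P P₁ P₂ Q : ℝ → ℝ),
        a < b → x 0 = a → x n = b →
        (∀ i, i < n → x i < x (i + 1)) →
        (∀ i, i < n → x (i + 1) - x i ≤ h) → h ≤ 1 →
        k + 1 ≤ n → x k < α → α < x (k + 1) →
        α - x (k + 1) - γ ≠ 0 →
        ContDiff ℝ 2 p₁ → ContDiff ℝ 2 p₂ →
        -- nodal interpolation values (p = p₁ on [a,α), p = p₂ on (α,b])
        (∀ i, i ≤ n → P (x i) = if x i < α then p₁ (x i) else p₂ (x i)) →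
        (∀ i, i ≤ n → P₁ (x i) = p₁ (x i)) →
        (∀ i, i ≤ n → P₂ (x i) = p₂ (x i)) →
        (∀ i, i ≤ n → Q (x i) = deriv p₂ (x i) - deriv p₁ (x i)) →
        -- affine on each element
        (∀ i, i < n → ∃ c d : ℝ, ∀ t ∈ Icc (x i) (x (i + 1)), P t = c * t + d) →
        (∀ i, i < n → ∃ c d : ℝ, ∀ t ∈ Icc (x i) (x (i + 1)), P₁ t = c * t + d) →
        (∀ i, i < n → ∃ c d : ℝ, ∀ t ∈ Icc (x i) (x (i + 1)), P₂ t = c * t + d) →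
        (∀ i, i < n → ∃ c d : ℝ, ∀ t ∈ Icc (x i) (x (i + 1)), Q t = c * t + d) →
        (let m₁ : ℝ := (α - x (k + 1)) / (x (k + 1) - x k)
         let m₂ : ℝ := (α - x k - γ) * (α - x (k + 1)) /
            ((x (k + 1) - x k) * (α - x (k + 1) - γ))
         let ψ : ℝ → ℝ := fun t =>
            if t < x k then 0 else if t < α then m₁ * (t - x k)
            else if t ≤ x (k + 1) then m₂ * (t - x (k + 1)) else 0
         let δ : ℝ := -(p₂ α - p₁ α) / (α - x (k + 1))
         -- the enriched interpolant  I_h p = π_h p + (π_h(p₂'-p₁'))ψ + δψ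
         let Ih : ℝ → ℝ := fun t => P t + (Q t + δ) * ψ t
         -- the broken interpolant  Ī_h p
         let Ibar : ℝ → ℝ := fun t => if t < α then P₁ t else P₂ t
         (∫ t in a..α, (deriv (fun s => Ibar s - Ih s) t) ^ 2) ^ ((1 : ℝ) / 2) ≤
           C * h * ((∫ t in a..b, (deriv (deriv p₁) t) ^ 2) ^ ((1 : ℝ) / 2) +
             (∫ t in a..b, (deriv (deriv p₂) t) ^ 2) ^ ((1 : ℝ) / 2))) := by
  refine ⟨5, by norm_num, ?_⟩
  intro a b n x k α γ h p₁ p₂ P P₁ P₂ Q hab hx0 hxn hx hxh _ hkn hkα hαk _ hp₁ hp₂ hP hP₁ _ hQ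
    hPaff hP₁aff _ hQaff m₁ m₂ ψ δ Ih Ibar
  obtain ⟨hp₁', hp₁'', hp₁''c⟩ := hasDerivAt_deriv_of_contDiff_two hp₁
  obtain ⟨hp₂', hp₂'', hp₂''c⟩ := hasDerivAt_deriv_of_contDiff_two hp₂
  have hxmono := (strictMonoOn_Iic_of_lt_succ hx).monotoneOn
  have hxk : ∀ i ≤ k, x i ≤ x k := fun i hi => hxmono (by simp; omega) (by simp; omega) hi
  have hak : a ≤ x k := hx0 ▸ hxk 0 k.zero_le
  have hPP₁ : EqOn P P₁ (Icc a (x k)) := hx0 ▸ eqOn_Icc_of_affineOn_of_eq_nodes k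
    (fun i hi => hx i (by omega)) (fun i hi => hPaff i (by omega))
    (fun i hi => hP₁aff i (by omega))
    fun i hi => by rw [hP i (by omega), if_pos ((hxk i hi).trans_lt hkα), hP₁ i (by omega)]
  have hzero : EqOn (fun s => Ibar s - Ih s) 0 (Ioo a (x k)) := fun s hs => by
    simp [Ibar, Ih, ψ, hs.2, hs.2.trans hkα, hPP₁ ⟨hs.1.le, hs.2.le⟩]
  have hcut : EqOn (fun s => Ibar s - Ih s)
      (cutError (p₂ - p₁) (deriv p₂ - deriv p₁) (x k) α (x (k + 1))) (Ioo (x k) α) :=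
    fun s hs => by
    simp only [Ibar, Ih, ψ, if_pos hs.2, if_neg (not_lt.2 hs.1.le)]
    exact sub_enriched_eq_cutError (hx k hkn) hαk.ne ⟨hs.1.le, hs.2.le.trans hαk.le⟩
      (hPaff k hkn) (hP₁aff k hkn) (hQaff k hkn) ((hP k (by omega)).trans (if_pos hkα))
      ((hP (k + 1) hkn).trans (if_neg hαk.not_gt)) (hP₁ k (by omega)) (hP₁ (k + 1) hkn)
      (hQ k (by omega)) (hQ (k + 1) hkn)
  have hX := integral_sq_deriv_le_of_eqOn_cutError (g := p₂ - p₁) (g' := deriv p₂ - deriv p₁)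
    (fun t => (hp₂' t).sub (hp₁' t)) (fun t => (hp₂'' t).sub (hp₁'' t)) (hp₂''c.sub hp₁''c)
    hak hkα hαk hzero hcut
  exact rpow_half_le_of_le_mul_integral_sq_sub hp₁''c hp₂''c hak (hx k hkn).le
    (hxn ▸ hxmono (by simp; omega) (by simp) hkn) (hxh k hkn) hX
end

section
/- (Lemma 3.2) Fix γ > 0. There exists a constant C > 0 depending only on γ — in particular independent of the partition, of the mesh size h, of the interface position α, and of p — such that for every partition with h ≤ 1 and every p as in the context that satisfies the Robin jump condition [p]_α = γ [p']_α, one has (∫_α^b |(Ī_h p − I_h p)'(x)|² dx)^{1/2} ≤ C h (‖p₁''‖_{L²(a,b)} + ‖p₂''‖_{L²(a,b)}), where the derivative is taken on each open subinterval of the partition (excluding the break points). -/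
/-!
Right of `x (k+1)` both interpolants are the nodal interpolant of `p₂` and `ψ` vanishes, so the
error lives on `(α, x (k+1))`, where its derivative is a constant minus `m₂` times an affine
function. The coefficients `m₂` and `δ` are chosen so that every term carrying `[p']_α` cancels;
what remains are differences `q v - q u` of `q = p₂' - p₁'` over one element and the mean
deviation of `q` from `q α` on `(x k, α)`. By the fundamental theorem of calculus and
Cauchy–Schwarz each is at most `√h (‖p₁''‖ + ‖p₂''‖)`, and `|m₂| ≤ 1`, so the derivative is
bounded by `4 √h (‖p₁''‖ + ‖p₂''‖)` on an interval of length at most `h`.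
-/

open Set intervalIntegral MeasureTheory

theorem sq_intervalIntegral_le {f : ℝ → ℝ} (hf : Continuous f) {u v : ℝ} (huv : u ≤ v) :
    (∫ t in u..v, f t) ^ 2 ≤ (v - u) * ∫ t in u..v, f t ^ 2 := by
  rcases huv.eq_or_lt with rfl | huv
  · simp
  have hlen : 0 < v - u := sub_pos.mpr huv
  have hjensen := (even_two.convexOn_pow (𝕜 := ℝ)).map_set_average_le
    (continuous_pow 2).continuousOn isClosed_univ (μ := volume) (t := uIoc u v) (f := f)
    (by simp [uIoc_of_le huv.le, huv]) (by simp [uIoc_of_le huv.le]) (by simp)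
    (hf.integrableOn_uIoc) ((hf.pow 2).integrableOn_uIoc)
  rw [interval_average_eq_div, interval_average_eq_div, div_pow,
    div_le_div_iff₀ (by positivity) hlen] at hjensen
  nlinarith

theorem abs_intervalIntegral_le_sqrt_mul_sqrt {f : ℝ → ℝ} (hf : Continuous f) {u v : ℝ}
    (huv : u ≤ v) : |∫ t in u..v, f t| ≤ √(v - u) * √(∫ t in u..v, f t ^ 2) := by
  rw [← Real.sqrt_mul (sub_nonneg.mpr huv), ← Real.sqrt_sq_eq_abs]
  exact Real.sqrt_le_sqrt (sq_intervalIntegral_le hf huv)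

def IsAffineOn (f : ℝ → ℝ) (s : Set ℝ) : Prop := ∃ c d : ℝ, ∀ t ∈ s, f t = c * t + d

namespace IsAffineOn

variable {f g : ℝ → ℝ} {u v t : ℝ}

theorem eq_add_slope_mul (hf : IsAffineOn f (Icc u v)) (huv : u < v) (ht : t ∈ Icc u v) :
    f t = f u + slope f u v * (t - u) := by
  obtain ⟨c, d, hcd⟩ := hf
  rw [slope_def_field, hcd t ht, hcd u (left_mem_Icc.mpr huv.le),
    hcd v (right_mem_Icc.mpr huv.le)]
  field_simp [sub_ne_zero.mpr huv.ne']
  ring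

theorem eqOn_of_eq_of_eq (hf : IsAffineOn f (Icc u v)) (hg : IsAffineOn g (Icc u v))
    (hu : f u = g u) (hv : f v = g v) : EqOn f g (Icc u v) := by
  intro t ht
  rcases (ht.1.trans ht.2).eq_or_lt with rfl | huv
  · rwa [le_antisymm ht.2 ht.1]
  rw [hf.eq_add_slope_mul huv ht, hg.eq_add_slope_mul huv ht, slope_def_field, slope_def_field,
    hu, hv]

theorem hasDerivAt_slope (hf : IsAffineOn f (Icc u v)) (ht : t ∈ Ioo u v) :
    HasDerivAt f (slope f u v) t := by
  have hline : (fun s => f u + slope f u v * (s - u)) =ᶠ[nhds t] f :=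
    Filter.eventually_of_mem (Icc_mem_nhds ht.1 ht.2) fun s hs =>
      (hf.eq_add_slope_mul (ht.1.trans ht.2) hs).symm
  refine HasDerivAt.congr_of_eventuallyEq ?_ hline.symm
  simpa using (((hasDerivAt_id t).sub_const u).const_mul (slope f u v)).const_add (f u)

end IsAffineOn

theorem eqOn_Icc_of_isAffineOn_of_eq_nodes (x : ℕ → ℝ) {f g : ℝ → ℝ} {m n : ℕ} (hmn : m ≤ n)
    (hf : ∀ i, m ≤ i → i < n → IsAffineOn f (Icc (x i) (x (i + 1))))
    (hg : ∀ i, m ≤ i → i < n → IsAffineOn g (Icc (x i) (x (i + 1))))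
    (hnodes : ∀ i, m ≤ i → i ≤ n → f (x i) = g (x i)) : EqOn f g (Icc (x m) (x n)) := by
  induction n, hmn using Nat.le_induction with
  | base =>
    intro t ht
    rw [le_antisymm ht.2 ht.1]
    exact hnodes m le_rfl le_rfl
  | succ n hmn ih =>
    intro t ht
    rcases le_or_gt t (x n) with htn | htn
    · exact ih (fun i hi hin => hf i hi (by omega)) (fun i hi hin => hg i hi (by omega))
        (fun i hi hin => hnodes i hi (by omega)) ⟨ht.1, htn⟩
    · exact (hf n hmn (by omega)).eqOn_of_eq_of_eq (hg n hmn (by omega))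
        (hnodes n hmn (by omega)) (hnodes (n + 1) (by omega) le_rfl) ⟨htn.le, ht.2⟩

theorem intervalIntegral_sq_le_of_abs_le {g : ℝ → ℝ} {α β b M : ℝ} (hαβ : α ≤ β) (hβb : β ≤ b)
    (hbound : ∀ t ∈ Ioo α β, |g t| ≤ M) (hzero : ∀ t ∈ Ioo β b, g t = 0) :
    ∫ t in α..b, g t ^ 2 ≤ (β - α) * M ^ 2 := by
  have hnull : ∀ᵐ t : ℝ, t ≠ β ∧ t ≠ b := by
    have := ((Set.finite_singleton b).insert β).measure_zero volume
    filter_upwards [measure_eq_zero_iff_ae_notMem.mp this] with t ht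
    simpa [not_or] using ht
  have hdom : (fun t => g t ^ 2) ≤ᵐ[volume.restrict (Ioc α b)]
      (Ioc α β).indicator (fun _ => M ^ 2) := by
    filter_upwards [ae_restrict_of_ae hnull, ae_restrict_mem measurableSet_Ioc] with t ht htI
    rcases lt_or_gt_of_ne ht.1 with htβ | htβ
    · rw [indicator_of_mem (show t ∈ Ioc α β from ⟨htI.1, htβ.le⟩)]
      exact sq_le_sq' (abs_le.mp (hbound t ⟨htI.1, htβ⟩)).1
        (abs_le.mp (hbound t ⟨htI.1, htβ⟩)).2
    · rw [hzero t ⟨htβ, lt_of_le_of_ne htI.2 ht.2⟩,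
        indicator_of_notMem (fun h => by linarith [h.2])]
      simp
  rw [integral_of_le (hαβ.trans hβb)]
  calc ∫ t in Ioc α b, g t ^ 2
      ≤ ∫ t in Ioc α b, (Ioc α β).indicator (fun _ => M ^ 2) t :=
        integral_mono_of_nonneg (Filter.Eventually.of_forall fun _ => sq_nonneg _)
          ((integrable_const _).indicator measurableSet_Ioc) hdom
    _ = (β - α) * M ^ 2 := by
        rw [integral_indicator_const _ measurableSet_Ioc,
          measureReal_restrict_apply measurableSet_Ioc,
          inter_eq_left.mpr (Ioc_subset_Ioc_right hβb), Real.volume_real_Ioc_of_le hαβ,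
          smul_eq_mul]

theorem abs_deriv_sub_deriv_le {p : ℝ → ℝ} (hp : ContDiff ℝ 2 p) {a b u v : ℝ} (hau : a ≤ u)
    (huv : u ≤ v) (hvb : v ≤ b) :
    |deriv p v - deriv p u| ≤ √(v - u) * √(∫ t in a..b, deriv (deriv p) t ^ 2) := by
  have hp' : ContDiff ℝ 1 (deriv p) := hp.iterate_deriv' 1 1
  have hp'' : Continuous (deriv (deriv p)) := hp'.continuous_deriv le_rfl
  rw [← integral_deriv_eq_sub (fun s _ => (hp'.differentiable one_ne_zero) s)
    (hp''.intervalIntegrable _ _)]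
  refine (abs_intervalIntegral_le_sqrt_mul_sqrt hp'' huv).trans
    (mul_le_mul_of_nonneg_left (Real.sqrt_le_sqrt ?_) (Real.sqrt_nonneg _))
  exact integral_mono_interval hau huv hvb (Filter.Eventually.of_forall fun _ => sq_nonneg _)
    ((hp''.pow 2).intervalIntegrable _ _)

theorem abs_deriv_jump_sub_le {p₁ p₂ : ℝ → ℝ} (hp₁ : ContDiff ℝ 2 p₁) (hp₂ : ContDiff ℝ 2 p₂)
    {a b u v : ℝ} (hau : a ≤ u) (huv : u ≤ v) (hvb : v ≤ b) :
    |(deriv p₂ v - deriv p₁ v) - (deriv p₂ u - deriv p₁ u)| ≤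
      √(v - u) * (√(∫ t in a..b, deriv (deriv p₁) t ^ 2) +
        √(∫ t in a..b, deriv (deriv p₂) t ^ 2)) := by
  have h₁ := abs_deriv_sub_deriv_le hp₁ hau huv hvb
  have h₂ := abs_deriv_sub_deriv_le hp₂ hau huv hvb
  calc |(deriv p₂ v - deriv p₁ v) - (deriv p₂ u - deriv p₁ u)|
      = |(deriv p₂ v - deriv p₂ u) - (deriv p₁ v - deriv p₁ u)| := by ring_nf
    _ ≤ |deriv p₂ v - deriv p₂ u| + |deriv p₁ v - deriv p₁ u| := abs_sub _ _
    _ ≤ _ := by linarith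

theorem intervalIntegral_deriv_sub_deriv {p₁ p₂ : ℝ → ℝ} (hp₁ : ContDiff ℝ 1 p₁)
    (hp₂ : ContDiff ℝ 1 p₂) (u v : ℝ) :
    ∫ s in u..v, (deriv p₂ s - deriv p₁ s) = (p₂ v - p₁ v) - (p₂ u - p₁ u) := by
  have hd : ∀ s, HasDerivAt (fun s => p₂ s - p₁ s) (deriv p₂ s - deriv p₁ s) s := fun s =>
    ((hp₂.differentiable one_ne_zero) s).hasDerivAt.sub
      ((hp₁.differentiable one_ne_zero) s).hasDerivAt
  exact integral_eq_sub_of_hasDerivAt (fun s _ => hd s)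
    (((hp₂.continuous_deriv le_rfl).sub (hp₁.continuous_deriv le_rfl)).intervalIntegrable _ _)

theorem abs_enrichment_slope_le_one {γ x₀ x₁ α : ℝ} (hγ : 0 ≤ γ) (hx₀α : x₀ ≤ α)
    (hαx₁ : α < x₁) :
    |(α - x₀ - γ) * (α - x₁) / ((x₁ - x₀) * (α - x₁ - γ))| ≤ 1 := by
  have hden : 0 < (x₁ - x₀) * (x₁ - α + γ) := by nlinarith
  rw [show (x₁ - x₀) * (α - x₁ - γ) = -((x₁ - x₀) * (x₁ - α + γ)) by ring, div_neg, abs_neg,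
    abs_div, abs_of_pos hden, div_le_one hden, abs_mul, abs_of_nonpos (by linarith : α - x₁ ≤ 0)]
  rcases abs_cases (α - x₀ - γ) with ⟨h, -⟩ | ⟨h, -⟩ <;> rw [h] <;> nlinarith

/-- With `δ = -γ q α / (α - x₁)` this reads `m₂ (q α + δ) = (α - x₀ - γ) q α / (x₁ - x₀)`: it is
the property that defines `m₂`, and it makes the `q α` terms of the error cancel. -/
theorem enrichment_slope_mul_sub {γ x₀ x₁ α qα : ℝ} (hx : x₁ - x₀ ≠ 0) (hα : α - x₁ ≠ 0)
    (hγ : α - x₁ - γ ≠ 0) :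
    (α - x₀ - γ) * (α - x₁) / ((x₁ - x₀) * (α - x₁ - γ)) * (qα - γ * qα / (α - x₁)) =
      (α - x₀ - γ) * qα / (x₁ - x₀) := by
  field_simp

theorem enriched_error_identity {γ x₀ x₁ α t qα q₀ σ R J₀ Jα m : ℝ} (hx : x₁ - x₀ ≠ 0)
    (hα : α - x₁ ≠ 0) (hγ : α - x₁ - γ ≠ 0)
    (hm : m = (α - x₀ - γ) * (α - x₁) / ((x₁ - x₀) * (α - x₁ - γ))) (hJα : Jα = γ * qα)
    (hR : R = Jα - J₀) :
    -J₀ / (x₁ - x₀) - (σ * (m * (t - x₁)) + (q₀ + σ * (t - x₀) + -Jα / (α - x₁)) * m) =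
      (R - (α - x₀) * qα) / (x₁ - x₀) - m * ((q₀ - qα) + σ * (t - x₀) + σ * (t - x₁)) := by
  subst hm hJα hR
  linear_combination -enrichment_slope_mul_sub (qα := qα) hx hα hγ

theorem abs_enriched_error_deriv_le {γ x₀ x₁ α ω t J₀ Jα m : ℝ} {q Q : ℝ → ℝ} (hγ : 0 ≤ γ)
    (hx₀α : x₀ < α) (hαx₁ : α < x₁) (hq : Continuous q)
    (hosc : ∀ u v, x₀ ≤ u → u ≤ v → v ≤ x₁ → |q v - q u| ≤ ω)
    (hm : m = (α - x₀ - γ) * (α - x₁) / ((x₁ - x₀) * (α - x₁ - γ))) (hJα : Jα = γ * q α)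
    (hJ₀ : ∫ s in x₀..α, q s = Jα - J₀) (hQ : IsAffineOn Q (Icc x₀ x₁)) (hQx₀ : Q x₀ = q x₀)
    (hQx₁ : Q x₁ = q x₁) (ht : t ∈ Icc x₀ x₁) :
    |-J₀ / (x₁ - x₀) -
        (slope Q x₀ x₁ * (m * (t - x₁)) + (Q t + -Jα / (α - x₁)) * m)| ≤ 4 * ω := by
  have hx₀x₁ : x₀ < x₁ := hx₀α.trans hαx₁
  have hlen : 0 < x₁ - x₀ := sub_pos.mpr hx₀x₁
  have hqα : |q x₀ - q α| ≤ ω := abs_sub_comm (q x₀) _ ▸ hosc _ _ le_rfl hx₀α.le hαx₁.le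
  set σ := slope Q x₀ x₁ with hσdef
  have hQt : Q t = q x₀ + σ * (t - x₀) := by rw [hQ.eq_add_slope_mul hx₀x₁ ht, hQx₀]
  have hσ : |σ| * (x₁ - x₀) ≤ ω := by
    have : σ * (x₁ - x₀) = q x₁ - q x₀ := by
      rw [hσdef, slope_def_field, hQx₀, hQx₁, div_mul_cancel₀ _ hlen.ne']
    rw [← abs_of_pos hlen, ← abs_mul, this]
    exact hosc _ _ le_rfl hx₀x₁.le le_rfl
  have hR : |(∫ s in x₀..α, q s) - (α - x₀) * q α| ≤ (α - x₀) * ω := by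
    have : (∫ s in x₀..α, q s) - (α - x₀) * q α = ∫ s in x₀..α, (q s - q α) := by
      rw [integral_sub (hq.intervalIntegrable _ _) intervalIntegrable_const,
        intervalIntegral.integral_const, smul_eq_mul]
    rw [this, ← abs_of_pos (sub_pos.mpr hx₀α), mul_comm]
    refine intervalIntegral.norm_integral_le_of_norm_le_const (f := fun s => q s - q α)
      fun s hs => ?_
    rw [uIoc_of_le hx₀α.le] at hs
    exact (abs_sub_comm _ _).trans_le (hosc _ _ hs.1.le hs.2 hαx₁.le)
  have hB : |(q x₀ - q α) + σ * (t - x₀) + σ * (t - x₁)| ≤ 3 * ω := by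
    have hσt : ∀ c ∈ Icc x₀ x₁, |σ * (t - c)| ≤ ω := fun c hc => by
      rw [abs_mul]
      exact (mul_le_mul_of_nonneg_left (abs_le.mpr ⟨by linarith [ht.1, hc.2], by
        linarith [ht.2, hc.1]⟩) (abs_nonneg σ)).trans hσ
    have := abs_add_three (q x₀ - q α) (σ * (t - x₀)) (σ * (t - x₁))
    linarith [hσt x₀ (left_mem_Icc.mpr hx₀x₁.le), hσt x₁ (right_mem_Icc.mpr hx₀x₁.le)]
  have hmle : |m| ≤ 1 := hm ▸ abs_enrichment_slope_le_one hγ hx₀α.le hαx₁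
  rw [hQt, enriched_error_identity hlen.ne' (sub_neg.mpr hαx₁).ne (by linarith) hm hJα hJ₀]
  calc _ ≤ |((∫ s in x₀..α, q s) - (α - x₀) * q α) / (x₁ - x₀)| +
        |m| * |(q x₀ - q α) + σ * (t - x₀) + σ * (t - x₁)| := by
          rw [← abs_mul]
          exact abs_sub _ _
    _ ≤ ω + 1 * (3 * ω) := by
        gcongr
        · rw [abs_div, abs_of_pos hlen, div_le_iff₀ hlen]
          nlinarith [hR, mul_nonneg (sub_nonneg.mpr hαx₁.le) ((abs_nonneg _).trans hqα)]
    _ = 4 * ω := by ring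

theorem hasDerivAt_sub_enriched {x₀ x₁ α δ m t : ℝ} {p₁ p₂ P P₂ Q Ibar ψ : ℝ → ℝ}
    (hP : IsAffineOn P (Icc x₀ x₁)) (hP₂ : IsAffineOn P₂ (Icc x₀ x₁))
    (hQ : IsAffineOn Q (Icc x₀ x₁)) (hPx₀ : P x₀ = p₁ x₀) (hPx₁ : P x₁ = p₂ x₁)
    (hP₂x₀ : P₂ x₀ = p₂ x₀) (hP₂x₁ : P₂ x₁ = p₂ x₁) (hIbar : ∀ s, α < s → Ibar s = P₂ s)
    (hψ : ∀ s ∈ Ioc α x₁, ψ s = m * (s - x₁)) (hx₀α : x₀ ≤ α) (ht : t ∈ Ioo α x₁) :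
    HasDerivAt (fun s => Ibar s - (P s + (Q s + δ) * ψ s))
      (-(p₂ x₀ - p₁ x₀) / (x₁ - x₀) - (slope Q x₀ x₁ * (m * (t - x₁)) + (Q t + δ) * m)) t := by
  have ht' : t ∈ Ioo x₀ x₁ := ⟨hx₀α.trans_lt ht.1, ht.2⟩
  have hev : (fun s => P₂ s - (P s + (Q s + δ) * (m * (s - x₁)))) =ᶠ[nhds t]
      fun s => Ibar s - (P s + (Q s + δ) * ψ s) := by
    filter_upwards [Ioo_mem_nhds ht.1 ht.2] with s hs
    rw [hIbar s hs.1, hψ s ⟨hs.1, hs.2.le⟩]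
  have hderiv : HasDerivAt (fun s => P₂ s - (P s + (Q s + δ) * (m * (s - x₁))))
      (slope P₂ x₀ x₁ - (slope P x₀ x₁ + (slope Q x₀ x₁ * (m * (t - x₁)) + (Q t + δ) * m))) t := by
    refine ((hP₂.hasDerivAt_slope ht').sub ((hP.hasDerivAt_slope ht').add
      (((hQ.hasDerivAt_slope ht').add_const δ).mul
        (((hasDerivAt_id t).sub_const x₁).const_mul m)))).congr_deriv ?_
    simp
  refine (hderiv.congr_of_eventuallyEq hev.symm).congr_deriv ?_
  have hlen : x₁ - x₀ ≠ 0 := sub_ne_zero.mpr (ht'.1.trans ht'.2).ne'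
  simp only [slope_def_field, hPx₀, hPx₁, hP₂x₀, hP₂x₁]
  field_simp
  ring

theorem deriv_sub_enriched_eq_zero {x : ℕ → ℝ} {n k : ℕ} {δ t : ℝ} {P P₂ Q Ibar ψ : ℝ → ℝ}
    (hkn : k + 1 ≤ n) (hP : ∀ i < n, IsAffineOn P (Icc (x i) (x (i + 1))))
    (hP₂ : ∀ i < n, IsAffineOn P₂ (Icc (x i) (x (i + 1))))
    (hnodes : ∀ i, k + 1 ≤ i → i ≤ n → P (x i) = P₂ (x i))
    (hIbar : ∀ s, x (k + 1) < s → Ibar s = P₂ s) (hψ : ∀ s, x (k + 1) < s → ψ s = 0)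
    (ht : t ∈ Ioo (x (k + 1)) (x n)) :
    deriv (fun s => Ibar s - (P s + (Q s + δ) * ψ s)) t = 0 := by
  have hPP₂ : EqOn P P₂ (Icc (x (k + 1)) (x n)) :=
    eqOn_Icc_of_isAffineOn_of_eq_nodes x hkn (fun i _ hi => hP i hi) (fun i _ hi => hP₂ i hi)
      hnodes
  have hev : (fun s => Ibar s - (P s + (Q s + δ) * ψ s)) =ᶠ[nhds t] fun _ => 0 := by
    filter_upwards [Ioo_mem_nhds ht.1 ht.2] with s hs
    rw [hIbar s hs.1, hψ s hs.1, hPP₂ ⟨hs.1.le, hs.2.le⟩]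
    ring
  rw [hev.deriv_eq, deriv_const]

/-- **Lemma 3.2.** For each fixed `γ > 0` there is a constant `C > 0`
depending only on `γ` — independent of the partition, mesh size `h`, interface
position `α`, and of `p` — such that for every `p` (given by `C²` pieces `p₁, p₂`)
satisfying the Robin jump condition `[p]_α = γ [p']_α`, the broken `H¹` seminorm
over `(α,b)` of `Ī_h p - I_h p` is bounded by
`C h (‖p₁''‖_{L²(a,b)} + ‖p₂''‖_{L²(a,b)})`. -/
theorem lemma_3_2_right_interpolation_estimate (γ : ℝ) (hγpos : 0 < γ) :
    ∃ C : ℝ, 0 < C ∧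
      ∀ (a b : ℝ) (n : ℕ) (x : ℕ → ℝ) (k : ℕ) (α h : ℝ)
        (p₁ p₂ P P₁ P₂ Q : ℝ → ℝ),
        a < b → x 0 = a → x n = b →
        (∀ i, i < n → x i < x (i + 1)) →
        (∀ i, i < n → x (i + 1) - x i ≤ h) → h ≤ 1 →
        k + 1 ≤ n → x k < α → α < x (k + 1) →
        ContDiff ℝ 2 p₁ → ContDiff ℝ 2 p₂ →
        -- the Robin jump condition [p]_α = γ [p']_α
        p₂ α - p₁ α = γ * (deriv p₂ α - deriv p₁ α) →
        -- nodal interpolation values (p = p₁ on [a,α), p = p₂ on (α,b])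
        (∀ i, i ≤ n → P (x i) = if x i < α then p₁ (x i) else p₂ (x i)) →
        (∀ i, i ≤ n → P₁ (x i) = p₁ (x i)) →
        (∀ i, i ≤ n → P₂ (x i) = p₂ (x i)) →
        (∀ i, i ≤ n → Q (x i) = deriv p₂ (x i) - deriv p₁ (x i)) →
        -- affine on each element
        (∀ i, i < n → ∃ c d : ℝ, ∀ t ∈ Icc (x i) (x (i + 1)), P t = c * t + d) →
        (∀ i, i < n → ∃ c d : ℝ, ∀ t ∈ Icc (x i) (x (i + 1)), P₁ t = c * t + d) →
        (∀ i, i < n → ∃ c d : ℝ, ∀ t ∈ Icc (x i) (x (i + 1)), P₂ t = c * t + d) →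
        (∀ i, i < n → ∃ c d : ℝ, ∀ t ∈ Icc (x i) (x (i + 1)), Q t = c * t + d) →
        (let m₁ : ℝ := (α - x (k + 1)) / (x (k + 1) - x k)
         let m₂ : ℝ := (α - x k - γ) * (α - x (k + 1)) /
            ((x (k + 1) - x k) * (α - x (k + 1) - γ))
         let ψ : ℝ → ℝ := fun t =>
            if t < x k then 0 else if t < α then m₁ * (t - x k)
            else if t ≤ x (k + 1) then m₂ * (t - x (k + 1)) else 0
         let δ : ℝ := -(p₂ α - p₁ α) / (α - x (k + 1))
         -- the enriched interpolant  I_h p = π_h p + (π_h(p₂'-p₁'))ψ + δψ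
         let Ih : ℝ → ℝ := fun t => P t + (Q t + δ) * ψ t
         -- the broken interpolant  Ī_h p
         let Ibar : ℝ → ℝ := fun t => if t < α then P₁ t else P₂ t
         (∫ t in α..b, (deriv (fun s => Ibar s - Ih s) t) ^ 2) ^ ((1 : ℝ) / 2) ≤
           C * h * ((∫ t in a..b, (deriv (deriv p₁) t) ^ 2) ^ ((1 : ℝ) / 2) +
             (∫ t in a..b, (deriv (deriv p₂) t) ^ 2) ^ ((1 : ℝ) / 2))) := by
  refine ⟨4, by norm_num, ?_⟩
  intro a b n x k α h p₁ p₂ P P₁ P₂ Q _ hx0 hxn hxlt hxh _ hkn hkα hαk hp₁ hp₂ hjump hP _ hP₂ hQ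
    hPaff _ hP₂aff hQaff m₁ m₂ ψ δ Ih Ibar
  simp only [← Real.sqrt_eq_rpow]
  set N := √(∫ t in a..b, deriv (deriv p₁) t ^ 2) + √(∫ t in a..b, deriv (deriv p₂) t ^ 2)
  have hmono := (strictMonoOn_Iic_of_lt_succ hxlt).monotoneOn
  have hak : a ≤ x k :=
    hx0 ▸ hmono (mem_Iic.mpr (Nat.zero_le n)) (mem_Iic.mpr (by omega)) (Nat.zero_le k)
  have hkb : x (k + 1) ≤ b := hxn ▸ hmono (mem_Iic.mpr hkn) (mem_Iic.mpr le_rfl) hkn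
  have hkh : x (k + 1) - x k ≤ h := hxh k hkn
  have hh : 0 ≤ h := (sub_pos.mpr (hkα.trans hαk)).le.trans hkh
  have hosc : ∀ u v, x k ≤ u → u ≤ v → v ≤ x (k + 1) →
      |(deriv p₂ v - deriv p₁ v) - (deriv p₂ u - deriv p₁ u)| ≤ √h * N := fun u v hu huv hv =>
    (abs_deriv_jump_sub_le hp₁ hp₂ (hak.trans hu) huv (hv.trans hkb)).trans
      (mul_le_mul_of_nonneg_right (Real.sqrt_le_sqrt (by linarith)) (by positivity))
  have hIbar : ∀ s, α < s → Ibar s = P₂ s := fun s hs => if_neg (not_lt.mpr hs.le)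
  have hleft : ∀ t ∈ Ioo α (x (k + 1)), |deriv (fun s => Ibar s - Ih s) t| ≤ 4 * (√h * N) := by
    intro t ht
    have hψ : ∀ s ∈ Ioc α (x (k + 1)), ψ s = m₂ * (s - x (k + 1)) := fun s hs => by
      simp only [ψ, if_neg (not_lt.mpr (hkα.trans hs.1).le), if_neg (not_lt.mpr hs.1.le),
        if_pos hs.2]
    rw [(hasDerivAt_sub_enriched (hPaff k hkn) (hP₂aff k hkn) (hQaff k hkn)
      ((hP k (by omega)).trans (if_pos hkα))
      ((hP (k + 1) hkn).trans (if_neg (not_lt.mpr hαk.le)))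
      (hP₂ k (by omega)) (hP₂ (k + 1) hkn) hIbar hψ hkα.le ht).deriv]
    exact abs_enriched_error_deriv_le hγpos.le hkα hαk
      ((hp₂.continuous_deriv one_le_two).sub (hp₁.continuous_deriv one_le_two)) hosc rfl hjump
      (intervalIntegral_deriv_sub_deriv (hp₁.of_le one_le_two) (hp₂.of_le one_le_two) _ _)
      (hQaff k hkn) (hQ k (by omega)) (hQ (k + 1) hkn) ⟨hkα.le.trans ht.1.le, ht.2.le⟩
  have hright : ∀ t ∈ Ioo (x (k + 1)) b, deriv (fun s => Ibar s - Ih s) t = 0 := by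
    refine fun t ht => deriv_sub_enriched_eq_zero hkn hPaff hP₂aff (fun i hi hin => ?_)
      (fun s hs => hIbar s (hαk.trans hs)) (fun s hs => ?_) (hxn ▸ ht)
    · rw [hP i hin, hP₂ i hin,
        if_neg (not_lt.mpr (hαk.le.trans (hmono (mem_Iic.mpr hkn) (mem_Iic.mpr hin) hi)))]
    · simp only [ψ, if_neg (not_lt.mpr ((hkα.trans hαk).trans hs).le),
        if_neg (not_lt.mpr (hαk.trans hs).le), if_neg (not_le.mpr hs)]
  calc √(∫ t in α..b, deriv (fun s => Ibar s - Ih s) t ^ 2)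
      ≤ √((x (k + 1) - α) * (4 * (√h * N)) ^ 2) :=
        Real.sqrt_le_sqrt (intervalIntegral_sq_le_of_abs_le hαk.le hkb hleft hright)
    _ ≤ √((4 * h * N) ^ 2) := by
        refine Real.sqrt_le_sqrt ?_
        rw [mul_pow, mul_pow, Real.sq_sqrt hh]
        nlinarith
    _ = 4 * h * N := Real.sqrt_sq (by positivity)
end

section
/- (Derivation of the weak formulation) Suppose β is positive and C¹ on [a,α] and on [α,b], w ∈ C([a,b]) with w ≥ 0, λ > 0, and f ∈ C([a,b]). Let p be given by C² functions p₁ on [a,α] and p₂ on [α,b] with p(a) = p(b) = 0, satisfying −(β p')' + w p = f on (a,α) and on (α,b), together with the jump conditions β(α⁺)p₂'(α) = β(α⁻)p₁'(α) (zero flux jump) and p₂(α) − p₁(α) = λ β(α⁻) p₁'(α). Then for every q that is piecewise C¹ on [a,α] and [α,b] with q(a) = q(b) = 0 one has ∫_a^α β p' q' dx + ∫_α^b β p' q' dx + ∫_a^b w p q dx + ([p]_α [q]_α)/λ = ∫_a^b f q dx, where [s]_α denotes the jump s(α⁺) − s(α⁻). -/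
/-! Integrate by parts on each side of `α`. The boundary terms at `a` and `b` vanish with
`q`; the two flux terms at `α` combine, by the zero flux jump, into `β(α⁻) p₁'(α) [q]_α`,
and the interface condition rewrites this as `[p]_α [q]_α / λ`. -/

open Set intervalIntegral

section PiecewiseIntegral

variable {E : Type*} [NormedAddCommGroup E] [NormedSpace ℝ E]
  {a α b : ℝ} {g₁ g₂ : ℝ → E}

theorem integral_ite_lt_eq_add (haα : a ≤ α) (hαb : α ≤ b)
    (hg₁ : IntervalIntegrable g₁ MeasureTheory.volume a α)
    (hg₂ : IntervalIntegrable g₂ MeasureTheory.volume α b) :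
    (∫ t in a..b, if t < α then g₁ t else g₂ t) =
      (∫ t in a..α, g₁ t) + ∫ t in α..b, g₂ t := by
  have h₁ : EqOn (fun t => if t < α then g₁ t else g₂ t) g₁ (uIoo a α) := fun t ht => by
    rw [uIoo_of_le haα] at ht
    simp [ht.2]
  have h₂ : EqOn (fun t => if t < α then g₁ t else g₂ t) g₂ (uIoo α b) := fun t ht => by
    rw [uIoo_of_le hαb] at ht
    simp [not_lt.mpr ht.1.le]
  rw [← integral_add_adjacent_intervals (hg₁.congr_uIoo h₁.symm) (hg₂.congr_uIoo h₂.symm),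
    integral_congr_uIoo h₁, integral_congr_uIoo h₂]

end PiecewiseIntegral

theorem integral_mul_deriv_eq_deriv_mul_of_contDiff {u v : ℝ → ℝ} (hu : ContDiff ℝ 1 u)
    (hv : ContDiff ℝ 1 v) (a b : ℝ) :
    ∫ t in a..b, u t * deriv v t = u b * v b - u a * v a - ∫ t in a..b, deriv u t * v t :=
  integral_mul_deriv_eq_deriv_mul
    (fun t _ => (hu.differentiable one_ne_zero t).hasDerivAt)
    (fun t _ => (hv.differentiable one_ne_zero t).hasDerivAt)
    ((hu.continuous_deriv le_rfl).intervalIntegrable a b)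
    ((hv.continuous_deriv le_rfl).intervalIntegrable a b)

theorem integral_mul_deriv_add_integral_mul_eq {c d : ℝ} (hcd : c ≤ d) {g r f q : ℝ → ℝ}
    (hg : ContDiff ℝ 1 g) (hq : ContDiff ℝ 1 q) (hr : ContinuousOn r (Icc c d))
    (hode : ∀ t ∈ Ioo c d, -deriv g t + r t = f t) :
    (∫ t in c..d, g t * deriv q t) + ∫ t in c..d, r t * q t =
      (∫ t in c..d, f t * q t) + g d * q d - g c * q c := by
  have hg'q : IntervalIntegrable (fun t => deriv g t * q t) MeasureTheory.volume c d :=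
    ((hg.continuous_deriv le_rfl).mul hq.continuous).intervalIntegrable c d
  have hrq : IntervalIntegrable (fun t => r t * q t) MeasureTheory.volume c d :=
    (hr.mul hq.continuous.continuousOn).intervalIntegrable_of_Icc hcd
  have hfq : (∫ t in c..d, f t * q t) =
      -(∫ t in c..d, deriv g t * q t) + ∫ t in c..d, r t * q t := by
    have h : (∫ t in c..d, f t * q t) = ∫ t in c..d, -(deriv g t * q t) + r t * q t :=
      integral_congr_Ioo_of_le hcd fun t ht => by rw [← hode t ht]; ring
    rw [h, integral_add (f := fun t => -(deriv g t * q t)) hg'q.neg hrq, integral_neg]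
  rw [integral_mul_deriv_eq_deriv_mul_of_contDiff hg hq, hfq]
  ring

theorem weak_formulation_derivation_general
    (a b α lam : ℝ) (hα : α ∈ Ioo a b) (hlam : 0 < lam)
    (β₁ β₂ w f p₁ p₂ : ℝ → ℝ)
    -- β is positive and C¹ on [a,α] and on [α,b]
    (hβ₁ : ContDiff ℝ 1 β₁) (hβ₂ : ContDiff ℝ 1 β₂)
    -- w and f
    (hw : ContinuousOn w (Icc a b))
    (hf : ContinuousOn f (Icc a b))
    -- p is piecewise C² with zero boundary values
    (hp₁ : ContDiff ℝ 2 p₁) (hp₂ : ContDiff ℝ 2 p₂)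
    -- the differential equation -(βp')' + wp = f on (a,α) and on (α,b)
    (hode₁ : ∀ t ∈ Ioo a α,
        -deriv (fun s => β₁ s * deriv p₁ s) t + w t * p₁ t = f t)
    (hode₂ : ∀ t ∈ Ioo α b,
        -deriv (fun s => β₂ s * deriv p₂ s) t + w t * p₂ t = f t)
    -- the jump conditions: zero flux jump and implicit interface condition
    (hflux : β₂ α * deriv p₂ α = β₁ α * deriv p₁ α)
    (hjump : p₂ α - p₁ α = lam * (β₁ α * deriv p₁ α)) :
    -- conclusion: the weak formulation holds for all piecewise C¹ test functions
    ∀ q₁ q₂ : ℝ → ℝ, ContDiff ℝ 1 q₁ → ContDiff ℝ 1 q₂ →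
      q₁ a = 0 → q₂ b = 0 →
      (∫ t in a..α, β₁ t * deriv p₁ t * deriv q₁ t) +
        (∫ t in α..b, β₂ t * deriv p₂ t * deriv q₂ t) +
        (∫ t in a..b, w t * (if t < α then p₁ t * q₁ t else p₂ t * q₂ t)) +
        (p₂ α - p₁ α) * (q₂ α - q₁ α) / lam =
      ∫ t in a..b, f t * (if t < α then q₁ t else q₂ t) := by
  intro q₁ q₂ hq₁ hq₂ hq₁a hq₂b
  obtain ⟨haα, hαb⟩ : a ≤ α ∧ α ≤ b := ⟨hα.1.le, hα.2.le⟩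
  have hsub₁ : Icc a α ⊆ Icc a b := Icc_subset_Icc le_rfl hαb
  have hsub₂ : Icc α b ⊆ Icc a b := Icc_subset_Icc haα le_rfl
  have green₁ := integral_mul_deriv_add_integral_mul_eq (r := fun t => w t * p₁ t) haα
    (hβ₁.mul hp₁.deriv') hq₁ ((hw.mono hsub₁).mul hp₁.continuous.continuousOn) hode₁
  have green₂ := integral_mul_deriv_add_integral_mul_eq (r := fun t => w t * p₂ t) hαb
    (hβ₂.mul hp₂.deriv') hq₂ ((hw.mono hsub₂).mul hp₂.continuous.continuousOn) hode₂
  have split_w :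
      (∫ t in a..b, if t < α then w t * (p₁ t * q₁ t) else w t * (p₂ t * q₂ t)) =
        (∫ t in a..α, w t * p₁ t * q₁ t) + ∫ t in α..b, w t * p₂ t * q₂ t := by
    simp only [mul_assoc]
    exact integral_ite_lt_eq_add haα hαb
      (((hw.mono hsub₁).mul (hp₁.continuous.mul hq₁.continuous).continuousOn)
        |>.intervalIntegrable_of_Icc haα)
      (((hw.mono hsub₂).mul (hp₂.continuous.mul hq₂.continuous).continuousOn)
        |>.intervalIntegrable_of_Icc hαb)
  have split_f : (∫ t in a..b, if t < α then f t * q₁ t else f t * q₂ t) =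
      (∫ t in a..α, f t * q₁ t) + ∫ t in α..b, f t * q₂ t :=
    integral_ite_lt_eq_add haα hαb
      (((hf.mono hsub₁).mul hq₁.continuous.continuousOn).intervalIntegrable_of_Icc haα)
      (((hf.mono hsub₂).mul hq₂.continuous.continuousOn).intervalIntegrable_of_Icc hαb)
  simp only [mul_ite]
  rw [split_w, split_f, hjump]
  rw [hq₁a] at green₁
  rw [hq₂b] at green₂
  field_simp
  linear_combination green₁ + green₂ - q₂ α * hflux

/-- Derivation of the weak formulation: a strong solution `p`
(given by `C²` pieces `p₁` on `[a,α]` and `p₂` on `[α,b]`) of the interface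
two-point boundary value problem `-(βp')' + wp = f`, with zero boundary values,
zero flux jump `β(α⁺)p₂'(α) = β(α⁻)p₁'(α)` and implicit interface condition
`[p]_α = λ β(α⁻) p₁'(α)`, satisfies `a(p,q) = (f,q)` for every piecewise `C¹`
test function `q` vanishing at `a` and `b`, where
`a(p,q) = ∫ β p' q' + ∫ w p q + [p]_α [q]_α / λ`. -/
theorem weak_formulation_derivation
    (a b α lam : ℝ) (hab : a < b) (hα : α ∈ Ioo a b) (hlam : 0 < lam)
    (β₁ β₂ w f p₁ p₂ : ℝ → ℝ)
    -- β is positive and C¹ on [a,α] and on [α,b]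
    (hβ₁ : ContDiff ℝ 1 β₁) (hβ₂ : ContDiff ℝ 1 β₂)
    (hβ₁pos : ∀ t ∈ Icc a α, 0 < β₁ t) (hβ₂pos : ∀ t ∈ Icc α b, 0 < β₂ t)
    -- w and f
    (hw : ContinuousOn w (Icc a b)) (hw0 : ∀ t ∈ Icc a b, 0 ≤ w t)
    (hf : ContinuousOn f (Icc a b))
    -- p is piecewise C² with zero boundary values
    (hp₁ : ContDiff ℝ 2 p₁) (hp₂ : ContDiff ℝ 2 p₂)
    (hpa : p₁ a = 0) (hpb : p₂ b = 0)
    -- the differential equation -(βp')' + wp = f on (a,α) and on (α,b)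
    (hode₁ : ∀ t ∈ Ioo a α,
        -deriv (fun s => β₁ s * deriv p₁ s) t + w t * p₁ t = f t)
    (hode₂ : ∀ t ∈ Ioo α b,
        -deriv (fun s => β₂ s * deriv p₂ s) t + w t * p₂ t = f t)
    -- the jump conditions: zero flux jump and implicit interface condition
    (hflux : β₂ α * deriv p₂ α = β₁ α * deriv p₁ α)
    (hjump : p₂ α - p₁ α = lam * (β₁ α * deriv p₁ α)) :
    -- conclusion: the weak formulation holds for all piecewise C¹ test functions
    ∀ q₁ q₂ : ℝ → ℝ, ContDiff ℝ 1 q₁ → ContDiff ℝ 1 q₂ →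
      q₁ a = 0 → q₂ b = 0 →
      (∫ t in a..α, β₁ t * deriv p₁ t * deriv q₁ t) +
        (∫ t in α..b, β₂ t * deriv p₂ t * deriv q₂ t) +
        (∫ t in a..b, w t * (if t < α then p₁ t * q₁ t else p₂ t * q₂ t)) +
        (p₂ α - p₁ α) * (q₂ α - q₁ α) / lam =
      ∫ t in a..b, f t * (if t < α then q₁ t else q₂ t) :=
  weak_formulation_derivation_general a b α lam hα hlam β₁ β₂ w f p₁ p₂ hβ₁ hβ₂ hw hf hp₁ hp₂ hode₁
    hode₂ hflux hjump
end
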